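/- arXiv:2303.05913 — 2 statements merged into one kernel-verified Lean document; each statement's English description precedes it below -/
import Mathlib

section
/- Let Q = (C_0, C_1, C_2, …) be a fixed nonnegative sequence with (1/(j+1)) ∑_{i=0}^{j} C_i bounded, let f_j ≥ 1 with ∏_{j=0}^∞ f_j² < ∞, let μ_j ≥ μ_0 ≥ 1, and let σ_j² ≥ 0 with ∑_{j=0}^∞ (j+1)² σ_j² < ∞. Then the double series Ξ̃ := ∑_{i₁,i₂=0}^∞ C_{i₁} C_{i₂} ∑_{j=max(i₁,i₂)}^∞ (σ_j²/μ_j) (∏_{l=max(i₁,i₂), l≠j}^∞ f_l²)(∏_{m=min(i₁,i₂)}^{max(i₁,i₂)−1} f_m) converges absolutely to a finite value. -/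
/-!
Every factor built from `f` is at most `P = ∏ f_j²` and `μ_j ≥ 1`, so the term indexed by
`(i₁, i₂, d)` is at most `P² C_{i₁} C_{i₂} σ²_{max(i₁,i₂)+d}`. Writing `j = max(i₁,i₂) + d`, the
terms with a fixed `j` add up to `(∑_{i ≤ j} C_i)² σ_j² ≤ M² (j+1)² σ_j²`, which is summable in `j`;
as all terms are nonnegative, the triple series may be summed in any order.
-/

open Finset Filter Function

section OneLe

variable {ι κ R : Type*} [CommMonoidWithZero R] [PartialOrder R] [ZeroLEOneClass R] [PosMulMono R]
  [TopologicalSpace R] [OrderClosedTopology R] {g : ι → R}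

lemma one_le_tprod_of_one_le (hg : ∀ i, 1 ≤ g i) : 1 ≤ ∏' i, g i := by
  by_cases hm : Multipliable g
  · exact ge_of_tendsto' hm.hasProd fun s => one_le_prod fun i _ => hg i
  · rw [tprod_eq_one_of_not_multipliable hm]

lemma prod_le_tprod_of_one_le (hg : ∀ i, 1 ≤ g i) (hm : Multipliable g) (s : Finset ι) :
    ∏ i ∈ s, g i ≤ ∏' i, g i :=
  ge_of_tendsto hm.hasProd <| eventually_atTop.2 ⟨s, fun _ hst => prod_mono_set_of_one_le hg hst⟩

lemma tprod_comp_le_tprod_of_one_le (hg : ∀ i, 1 ≤ g i) (hm : Multipliable g) {e : κ → ι}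
    (he : Injective e) : ∏' k, g (e k) ≤ ∏' i, g i :=
  tprod_le_of_prod_le' (one_le_tprod_of_one_le hg) fun s => by
    simpa only [prod_map, Embedding.coeFn_mk] using prod_le_tprod_of_one_le hg hm (s.map ⟨e, he⟩)

end OneLe

lemma summable_mul_mul_nat_add_max {a s : ℕ → ℝ} (ha : ∀ i, 0 ≤ a i) (hs : ∀ j, 0 ≤ s j)
    (h : Summable fun j => (∑ i ∈ range (j + 1), a i) ^ 2 * s j) :
    Summable fun q : (ℕ × ℕ) × ℕ => a q.1.1 * a q.1.2 * s (max q.1.1 q.1.2 + q.2) := by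
  set G : ℕ × (ℕ × ℕ) → ℝ := fun q =>
    if q.2 ∈ range (q.1 + 1) ×ˢ range (q.1 + 1) then a q.2.1 * a q.2.2 * s q.1 else 0
  have hG0 : 0 ≤ G := fun q => by
    dsimp only [G]
    split_ifs
    exacts [mul_nonneg (mul_nonneg (ha _) (ha _)) (hs _), le_rfl]
  have hfiber : ∀ j, ∑' p, G (j, p) = (∑ i ∈ range (j + 1), a i) ^ 2 * s j := fun j => by
    rw [tsum_eq_sum (s := range (j + 1) ×ˢ range (j + 1)) fun p hp => if_neg hp, sq,
      sum_mul_sum, sum_product, sum_mul]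
    refine sum_congr rfl fun i hi => ?_
    rw [sum_mul]
    exact sum_congr rfl fun i' hi' => if_pos (mem_product.2 ⟨hi, hi'⟩)
  have hG : Summable G := (summable_prod_of_nonneg hG0).2
    ⟨fun j => summable_of_ne_finset_zero (s := range (j + 1) ×ˢ range (j + 1)) fun p hp =>
      if_neg hp, by simpa only [hfiber] using h⟩
  have he : Injective fun q : (ℕ × ℕ) × ℕ => (max q.1.1 q.1.2 + q.2, q.1) := by
    rintro ⟨p, d⟩ ⟨p', d'⟩ h
    obtain ⟨hj, rfl⟩ := Prod.mk.inj h
    simpa using hj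
  refine (hG.comp_injective he).congr fun q => if_pos ?_
  simp only [mem_product, mem_range]
  omega

lemma summable_sq_sum_range_mul_of_avg_le {a s : ℕ → ℝ} (ha : ∀ i, 0 ≤ a i) (hs : ∀ j, 0 ≤ s j)
    {M : ℝ} (hM : ∀ j, (∑ i ∈ range (j + 1), a i) / ((j : ℝ) + 1) ≤ M)
    (h : Summable fun j : ℕ => ((j : ℝ) + 1) ^ 2 * s j) :
    Summable fun j => (∑ i ∈ range (j + 1), a i) ^ 2 * s j := by
  refine (h.mul_left (M ^ 2)).of_nonneg_of_le (fun j => by have := hs j; positivity) fun j => ?_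
  have hsum : ∑ i ∈ range (j + 1), a i ≤ M * ((j : ℝ) + 1) :=
    (div_le_iff₀ (by positivity)).1 (hM j)
  calc (∑ i ∈ range (j + 1), a i) ^ 2 * s j ≤ (M * ((j : ℝ) + 1)) ^ 2 * s j := by
        gcongr
        · exact hs j
        · exact sum_nonneg fun i _ => ha i
    _ = M ^ 2 * (((j : ℝ) + 1) ^ 2 * s j) := by ring

lemma xi_summand_mem_Icc {f μs σsq : ℕ → ℝ} (hf1 : ∀ j, 1 ≤ f j)
    (hfp : Multipliable fun j => f j ^ 2) (hμ : ∀ j, 1 ≤ μs j) (hσ0 : ∀ j, 0 ≤ σsq j)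
    (k d : ℕ) (s : Finset ℕ) :
    σsq (k + d) / μs (k + d) * ((∏' l, f (k + l) ^ 2) / f (k + d) ^ 2) * ∏ m ∈ s, f m ∈
      Set.Icc 0 ((∏' j, f j ^ 2) ^ 2 * σsq (k + d)) := by
  have hf2 : ∀ j, 1 ≤ f j ^ 2 := fun j => one_le_pow₀ (hf1 j)
  set P := ∏' j, f j ^ 2
  have htail : 1 ≤ ∏' l, f (k + l) ^ 2 := one_le_tprod_of_one_le fun l => hf2 (k + l)
  have hratio : (∏' l, f (k + l) ^ 2) / f (k + d) ^ 2 ≤ P :=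
    (div_le_self (by linarith) (hf2 _)).trans
      (tprod_comp_le_tprod_of_one_le hf2 hfp (add_right_injective k))
  have hprod : 1 ≤ ∏ m ∈ s, f m := one_le_prod fun m _ => hf1 m
  have hprod_le : ∏ m ∈ s, f m ≤ P :=
    calc ∏ m ∈ s, f m ≤ ∏ m ∈ s, f m ^ 2 :=
          prod_le_prod (fun m _ => by linarith [hf1 m]) fun m _ => le_self_pow₀ (hf1 m) two_ne_zero
      _ ≤ P := prod_le_tprod_of_one_le hf2 hfp s
  have hσμ0 : 0 ≤ σsq (k + d) / μs (k + d) := div_nonneg (hσ0 _) (zero_le_one.trans (hμ _))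
  have hratio0 : 0 ≤ (∏' l, f (k + l) ^ 2) / f (k + d) ^ 2 := div_nonneg (by linarith) (sq_nonneg _)
  refine ⟨mul_nonneg (mul_nonneg hσμ0 hratio0) (by linarith), ?_⟩
  calc _ ≤ σsq (k + d) * P * P :=
        mul_le_mul (mul_le_mul (div_le_self (hσ0 _) (hμ _)) hratio hratio0 (hσ0 _)) hprod_le
          (by linarith) (mul_nonneg (hσ0 _) (by linarith))
    _ = P ^ 2 * σsq (k + d) := by ring

/-- Absolute convergence of the asymptotic conditional variance `Ξ̃` of the Mack bootstrap
estimation uncertainty part: for a nonnegative diagonal sequence `Cd` with bounded averages,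
`f_j ≥ 1` with `∏ f_j² < ∞`, `μ_j ≥ 1`, `σ_j² ≥ 0` with `∑ (j+1)² σ_j² < ∞`, the double
series `∑_{i₁,i₂} Cd_{i₁} Cd_{i₂} ∑_{j≥max(i₁,i₂)} (σ_j²/μ_j)
(∏_{l≥max, l≠j} f_l²)(∏_{m=min}^{max−1} f_m)` converges absolutely. -/
theorem xi_tilde_summable (Cd f μs σsq : ℕ → ℝ)
    (hC0 : ∀ i, 0 ≤ Cd i)
    (hCavg : ∃ M : ℝ, ∀ j, (∑ i ∈ Finset.range (j + 1), Cd i) / ((j : ℝ) + 1) ≤ M)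
    (hf1 : ∀ j, 1 ≤ f j) (hfp : Multipliable (fun j => (f j) ^ 2))
    (hμ : ∀ j, 1 ≤ μs j)
    (hσ0 : ∀ j, 0 ≤ σsq j) (hσs : Summable (fun j : ℕ => ((j : ℝ) + 1) ^ 2 * σsq j)) :
    Summable (fun p : ℕ × ℕ =>
      Cd p.1 * Cd p.2 *
        ∑' d : ℕ,
          (σsq (max p.1 p.2 + d) / μs (max p.1 p.2 + d)) *
            ((∏' l : ℕ, (f (max p.1 p.2 + l)) ^ 2) / (f (max p.1 p.2 + d)) ^ 2) *
            ∏ m ∈ Finset.Ico (min p.1 p.2) (max p.1 p.2), f m) := by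
  obtain ⟨M, hM⟩ := hCavg
  set F : (ℕ × ℕ) × ℕ → ℝ := fun q => Cd q.1.1 * Cd q.1.2 *
    (σsq (max q.1.1 q.1.2 + q.2) / μs (max q.1.1 q.1.2 + q.2) *
      ((∏' l : ℕ, f (max q.1.1 q.1.2 + l) ^ 2) / f (max q.1.1 q.1.2 + q.2) ^ 2) *
      ∏ m ∈ Ico (min q.1.1 q.1.2) (max q.1.1 q.1.2), f m)
  have hbound (q : (ℕ × ℕ) × ℕ) := xi_summand_mem_Icc hf1 hfp hμ hσ0 (max q.1.1 q.1.2) q.2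
    (Ico (min q.1.1 q.1.2) (max q.1.1 q.1.2))
  have hCC (q : (ℕ × ℕ) × ℕ) : 0 ≤ Cd q.1.1 * Cd q.1.2 := mul_nonneg (hC0 _) (hC0 _)
  have hF0 : 0 ≤ F := fun q => mul_nonneg (hCC q) (hbound q).1
  have hdom := (summable_mul_mul_nat_add_max hC0 hσ0
    (summable_sq_sum_range_mul_of_avg_le hC0 hσ0 hM hσs)).mul_left ((∏' j, f j ^ 2) ^ 2)
  have hF : Summable F := hdom.of_nonneg_of_le hF0 fun q =>
    (mul_le_mul_of_nonneg_left (hbound q).2 (hCC q)).trans_eq (by ring)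
  simpa only [F, tsum_mul_left] using ((summable_prod_of_nonneg hF0).1 hF).2
end

section
/- In Mack's bootstrap (fixed-design, Step 5 of the algorithm), conditional on the data, the bootstrap decomposition analogue of the estimation-uncertainty split degenerates: defining f*_{j,n}(Q) := E*(∑_i C_{i,j} F*_{i,j} | Q* = Q) / E*(∑_i C_{i,j} | Q* = Q), one has f*_{j,n}(Q) = f̂_{j,n} for every j, and consequently the second term (R*_{I,n} − R̂_{I,n})₂^{(2)} = ∑_i C*_{I-i,i}(∏_j f*_{j,n}(Q) − ∏_j f̂_{j,n}) is identically zero. -/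
open MeasureTheory

theorem Finset.sum_mul_const_div_sum {ι K : Type*} [Field K] (s : Finset ι) (w : ι → K) (c : K)
    (hw : ∑ i ∈ s, w i ≠ 0) : (∑ i ∈ s, w i * c) / ∑ i ∈ s, w i = c := by
  rw [← Finset.sum_mul, mul_div_cancel_left₀ c hw]

theorem mack_bootstrap_decomposition_degenerates_general
    {Ω : Type*} [MeasurableSpace Ω] (μ : Measure Ω)
    (I n : ℕ) (C : ℕ → ℕ → ℝ) (fhat : ℕ → ℝ) (nrows : ℕ → ℕ)
    (hCpos : ∀ j, 0 < ∑ i ∈ Finset.range (nrows j), C i j)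
    (Fstar : ℕ → ℕ → Ω → ℝ)
    (hF : ∀ i j, ∫ ω, Fstar i j ω ∂μ = fhat j)
    (fstarQ : ℕ → ℝ)
    (hfstarQ : ∀ j, fstarQ j =
      (∑ i ∈ Finset.range (nrows j), C i j * ∫ ω, Fstar i j ω ∂μ) /
        ∑ i ∈ Finset.range (nrows j), C i j)
    (Cstar : ℕ → ℝ) :
    (∀ j, fstarQ j = fhat j) ∧
      ∑ i ∈ Finset.range (I + n + 1),
        Cstar i * ((∏ j ∈ Finset.Ico i (I + n), fstarQ j) -
          ∏ j ∈ Finset.Ico i (I + n), fhat j) = 0 := by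
  have hfix : ∀ j, fstarQ j = fhat j := fun j => by
    rw [hfstarQ j]
    simp only [hF]
    exact Finset.sum_mul_const_div_sum _ _ _ (hCpos j).ne'
  obtain rfl : fstarQ = fhat := funext hfix
  simp

/-- Degeneracy of the Mack bootstrap decomposition of the estimation uncertainty: in the
fixed-design bootstrap the upper-triangle claims `C` are data-measurable (deterministic
given the data) and `F*_{i,j}` is independent of the conditioning event, with bootstrap mean
`E*(F*_{i,j}) = f̂_j`.  Hence `f*_{j,n}(Q) = E*(∑_i C_{i,j} F*_{i,j})/E*(∑_i C_{i,j}) = f̂_j`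
for every `j`, and consequently the second decomposition term
`(R* − R̂)₂^{(2)} = ∑_i C*_i (∏_j f*_{j,n}(Q) − ∏_j f̂_j)` vanishes identically. -/
theorem mack_bootstrap_decomposition_degenerates
    {Ω : Type*} [MeasurableSpace Ω] (μ : Measure Ω) [IsProbabilityMeasure μ]
    (I n : ℕ) (C : ℕ → ℕ → ℝ) (fhat : ℕ → ℝ) (nrows : ℕ → ℕ)
    (hCpos : ∀ j, 0 < ∑ i ∈ Finset.range (nrows j), C i j)
    (Fstar : ℕ → ℕ → Ω → ℝ)
    (hF : ∀ i j, ∫ ω, Fstar i j ω ∂μ = fhat j)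
    (fstarQ : ℕ → ℝ)
    (hfstarQ : ∀ j, fstarQ j =
      (∑ i ∈ Finset.range (nrows j), C i j * ∫ ω, Fstar i j ω ∂μ) /
        ∑ i ∈ Finset.range (nrows j), C i j)
    (Cstar : ℕ → ℝ) :
    (∀ j, fstarQ j = fhat j) ∧
      ∑ i ∈ Finset.range (I + n + 1),
        Cstar i * ((∏ j ∈ Finset.Ico i (I + n), fstarQ j) -
          ∏ j ∈ Finset.Ico i (I + n), fhat j) = 0 :=
  mack_bootstrap_decomposition_degenerates_general μ I n C fhat nrows hCpos Fstar hF fstarQ hfstarQ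
    Cstar
end
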